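/- arXiv:2309.01304 — 2 statements merged into one kernel-verified Lean document; each statement's English description precedes it below -/
import Mathlib

section
/- If v ∈ H^{σ/2}(ℝ) satisfies K₁(v) < 0, then I₁(v) > d₁. -/
open MeasureTheory Real Filter Topology ComplexConjugate
open scoped FourierTransform

noncomputable section

/-- `w` is a representative of the Fourier–Plancherel transform of `u ∈ L²(ℝ)`,
characterized by duality against Schwartz functions. -/
def IsFourierRep (u : ℝ → ℝ) (w : ℝ → ℂ) : Prop :=
  MemLp w 2 (volume : Measure ℝ) ∧
    ∀ φ : SchwartzMap ℝ ℂ, ∫ ξ : ℝ, w ξ * φ ξ = ∫ x : ℝ, (u x : ℂ) * 𝓕 (⇑φ) x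

/-- A choice of the Fourier–Plancherel transform `û` of `u`. -/
def hatFT (u : ℝ → ℝ) : ℝ → ℂ :=
  haveI := Classical.propDecidable (∃ w, IsFourierRep u w)
  if h : ∃ w, IsFourierRep u w then h.choose else 0

/-- `‖D_x^{σ/2} u‖_{L²}² = ∫ |ξ|^σ |û(ξ)|² dξ`. -/
def fracSq (σ : ℝ) (u : ℝ → ℝ) : ℝ := ∫ ξ : ℝ, |ξ| ^ σ * ‖hatFT u ξ‖ ^ 2

/-- `u ∈ H^{σ/2}(ℝ)` : `u ∈ L²` and `∫ |ξ|^σ |û(ξ)|² dξ < ∞`. -/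
def MemHhalf (σ : ℝ) (u : ℝ → ℝ) : Prop :=
  MemLp u 2 (volume : Measure ℝ) ∧
    Integrable (fun ξ : ℝ => |ξ| ^ σ * ‖hatFT u ξ‖ ^ 2) volume

/-- `u ∈ H^{σ+1}(ℝ)` : `∫ (1+|ξ|²)^{σ+1} |û(ξ)|² dξ < ∞`. -/
def MemHsigmaPlusOne (σ : ℝ) (u : ℝ → ℝ) : Prop :=
  Integrable (fun ξ : ℝ => (1 + |ξ| ^ 2) ^ (σ + 1) * ‖hatFT u ξ‖ ^ 2) volume

/-- `u` is nontrivial (not a.e. zero). -/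
def Nontriv (u : ℝ → ℝ) : Prop := ¬ u =ᵐ[(volume : Measure ℝ)] (fun _ => (0 : ℝ))

/-- `u ∈ H^{σ/2}(ℝ)` is a weak solution of `D_x^σ u + c u - f (u) = 0` on `ℝ`. -/
def IsWeakSol (σ c : ℝ) (f : ℝ → ℝ) (u : ℝ → ℝ) : Prop :=
  MemHhalf σ u ∧
    ∀ φ : SchwartzMap ℝ ℂ,
      (∫ ξ : ℝ, ((|ξ| ^ σ : ℝ) : ℂ) * hatFT u ξ * conj (𝓕 (⇑φ) ξ))
        + (c : ℂ) * (∫ x : ℝ, (u x : ℂ) * φ x)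
        - (∫ x : ℝ, (f (u x) : ℂ) * φ x) = 0

/-- The functional `S₁`. -/
def S1 (σ c p q : ℝ) (u : ℝ → ℝ) : ℝ :=
  (1 / 2) * fracSq σ u + (c / 2) * (∫ x : ℝ, u x ^ 2)
    + (1 / (p + 1)) * (∫ x : ℝ, |u x| ^ (p + 1))
    - (1 / (q + 1)) * (∫ x : ℝ, |u x| ^ (q + 1))

/-- The Nehari functional `K₁`. -/
def K1 (σ c p q : ℝ) (u : ℝ → ℝ) : ℝ :=
  fracSq σ u + c * (∫ x : ℝ, u x ^ 2)
    + (∫ x : ℝ, |u x| ^ (p + 1)) - (∫ x : ℝ, |u x| ^ (q + 1))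

/-- The Nehari set `𝒦₁`. -/
def nehariSet (σ c p q : ℝ) : Set (ℝ → ℝ) :=
  {v | MemHhalf σ v ∧ Nontriv v ∧ K1 σ c p q v = 0}

/-- `d₁ = inf {S₁ v : v ∈ 𝒦₁}`. -/
def d1 (σ c p q : ℝ) : ℝ := sInf (S1 σ c p q '' nehariSet σ c p q)

/-- The functional `I₁`. -/
def I1 (σ c p q : ℝ) (u : ℝ → ℝ) : ℝ :=
  (1 / 2 - 1 / (q + 1)) * (fracSq σ u + c * (∫ x : ℝ, u x ^ 2))
    + (1 / (p + 1) - 1 / (q + 1)) * (∫ x : ℝ, |u x| ^ (p + 1))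

/-!
Along the ray `t ↦ t • v` one has `K₁(t v) = t² (Q + t^{p-1} B - t^{q-1} C)`, where
`Q = ‖D_x^{σ/2} v‖² + c ‖v‖²`, `B = ‖v‖_{p+1}^{p+1}` and `C = ‖v‖_{q+1}^{q+1}`. Since `K₁(v) < 0`,
`v` is nontrivial, so `Q > 0`, and the intermediate value theorem gives `t ∈ (0, 1)` with
`t v ∈ 𝒦₁`. Hence `d₁ ≤ S₁(t v) = I₁(t v) < I₁(v)`, because `I₁` is a sum of nonnegative terms
homogeneous of degrees `2` and `p + 1 > 0`.
-/

/-- The quadratic part `‖D_x^{σ/2} u‖² + c ‖u‖²` shared by `K₁` and `I₁`. -/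
def quadPart (σ c : ℝ) (u : ℝ → ℝ) : ℝ := fracSq σ u + c * ∫ x : ℝ, u x ^ 2

namespace IsFourierRep

variable {u : ℝ → ℝ} {w w' : ℝ → ℂ}

theorem ae_eq (h : IsFourierRep u w) (h' : IsFourierRep u w') : w =ᵐ[volume] w' := by
  refine ae_eq_of_integral_contDiff_smul_eq (h.1.locallyIntegrable one_le_two)
    (h'.1.locallyIntegrable one_le_two) fun g hg hgs => ?_
  have hφ : HasCompactSupport (fun x => (g x : ℂ)) := hgs.comp_left Complex.ofReal_zero
  set φ := hφ.toSchwartzMap (Complex.ofRealCLM.contDiff.comp hg)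
  have pairing : ∀ w : ℝ → ℂ, ∫ x, g x • w x = ∫ ξ, w ξ * φ ξ := fun w => by
    simp only [Complex.real_smul, mul_comm]
    rfl
  rw [pairing, pairing, h.2, h'.2]

theorem const_mul (h : IsFourierRep u w) (t : ℝ) :
    IsFourierRep (fun x => t * u x) (fun ξ => (t : ℂ) * w ξ) := by
  refine ⟨h.1.const_mul _, fun φ => ?_⟩
  simp only [Complex.ofReal_mul, mul_assoc, integral_const_mul, h.2 φ]

end IsFourierRep

theorem isFourierRep_hatFT {u : ℝ → ℝ} (h : ∃ w, IsFourierRep u w) :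
    IsFourierRep u (hatFT u) := by
  rw [hatFT, dif_pos h]
  exact h.choose_spec

theorem hatFT_eq_zero {u : ℝ → ℝ} (h : ¬∃ w, IsFourierRep u w) : hatFT u = 0 := by
  rw [hatFT, dif_neg h]

-- `hatFT` is a choice, so only its a.e. class is homogeneous; uniqueness of representatives does it.
theorem hatFT_const_mul (u : ℝ → ℝ) {t : ℝ} (ht : t ≠ 0) :
    hatFT (fun x => t * u x) =ᵐ[volume] fun ξ => (t : ℂ) * hatFT u ξ := by
  by_cases h : ∃ w, IsFourierRep u w
  · have hrep := (isFourierRep_hatFT h).const_mul t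
    exact (isFourierRep_hatFT ⟨_, hrep⟩).ae_eq hrep
  · have h' : ¬∃ w, IsFourierRep (fun x => t * u x) w := fun ⟨w, hw⟩ =>
      h ⟨_, by simpa only [inv_mul_cancel_left₀ ht] using hw.const_mul t⁻¹⟩
    rw [hatFT_eq_zero h, hatFT_eq_zero h']
    filter_upwards with ξ
    simp

theorem weighted_norm_hatFT_const_mul_sq (σ : ℝ) (u : ℝ → ℝ) {t : ℝ} (ht : t ≠ 0) :
    (fun ξ : ℝ => |ξ| ^ σ * ‖hatFT (fun x => t * u x) ξ‖ ^ 2) =ᵐ[volume]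
      fun ξ => t ^ 2 * (|ξ| ^ σ * ‖hatFT u ξ‖ ^ 2) := by
  filter_upwards [hatFT_const_mul u ht] with ξ hξ
  rw [hξ, norm_mul, Complex.norm_real, Real.norm_eq_abs, mul_pow, sq_abs]
  ring

theorem fracSq_const_mul (σ : ℝ) (u : ℝ → ℝ) {t : ℝ} (ht : t ≠ 0) :
    fracSq σ (fun x => t * u x) = t ^ 2 * fracSq σ u := by
  rw [fracSq, fracSq, ← integral_const_mul]
  exact integral_congr_ae (weighted_norm_hatFT_const_mul_sq σ u ht)

theorem MemHhalf.const_mul {σ : ℝ} {u : ℝ → ℝ} (hu : MemHhalf σ u) {t : ℝ} (ht : t ≠ 0) :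
    MemHhalf σ (fun x => t * u x) :=
  ⟨hu.1.const_mul t, (hu.2.const_mul (t ^ 2)).congr (weighted_norm_hatFT_const_mul_sq σ u ht).symm⟩

theorem fracSq_nonneg (σ : ℝ) (u : ℝ → ℝ) : 0 ≤ fracSq σ u :=
  integral_nonneg fun _ => mul_nonneg (rpow_nonneg (abs_nonneg _) _) (sq_nonneg _)

theorem integral_abs_rpow_nonneg (u : ℝ → ℝ) (r : ℝ) : 0 ≤ ∫ x : ℝ, |u x| ^ r :=
  integral_nonneg fun _ => rpow_nonneg (abs_nonneg _) _

theorem integral_abs_rpow_const_mul (u : ℝ → ℝ) {t : ℝ} (ht : 0 < t) (r : ℝ) :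
    ∫ x : ℝ, |t * u x| ^ r = t ^ r * ∫ x : ℝ, |u x| ^ r := by
  rw [← integral_const_mul]
  congr 1 with x
  rw [abs_mul, mul_rpow (abs_nonneg _) (abs_nonneg _), abs_of_pos ht]

theorem Nontriv.const_mul {u : ℝ → ℝ} (hu : Nontriv u) {t : ℝ} (ht : t ≠ 0) :
    Nontriv (fun x => t * u x) := fun hz =>
  hu <| by filter_upwards [hz] with x hx using (mul_eq_zero.1 hx).resolve_left ht

theorem nontriv_of_integral_abs_rpow_ne_zero {u : ℝ → ℝ} {r : ℝ} (hr : r ≠ 0)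
    (h : ∫ x : ℝ, |u x| ^ r ≠ 0) : Nontriv u := fun hz =>
  h <| integral_eq_zero_of_ae <| by filter_upwards [hz] with x hx using by simp [hx, zero_rpow hr]

theorem integral_sq_pos {u : ℝ → ℝ} (hu : MemLp u 2 volume) (hnt : Nontriv u) :
    0 < ∫ x : ℝ, u x ^ 2 := by
  refine (integral_nonneg fun x => sq_nonneg (u x)).lt_of_ne fun h => hnt ?_
  filter_upwards [(integral_eq_zero_iff_of_nonneg (fun x => sq_nonneg (u x)) hu.integrable_sq).1
    h.symm] with x hx
  exact pow_eq_zero_iff two_ne_zero |>.1 hx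

section Functionals

variable {σ c p q : ℝ}

theorem quadPart_nonneg (hc : 0 ≤ c) (u : ℝ → ℝ) : 0 ≤ quadPart σ c u :=
  add_nonneg (fracSq_nonneg σ u) (mul_nonneg hc (integral_nonneg fun x => sq_nonneg (u x)))

theorem quadPart_pos (hc : 0 < c) {u : ℝ → ℝ} (hu : MemHhalf σ u) (hnt : Nontriv u) :
    0 < quadPart σ c u :=
  add_pos_of_nonneg_of_pos (fracSq_nonneg σ u) (mul_pos hc (integral_sq_pos hu.1 hnt))

theorem quadPart_const_mul (u : ℝ → ℝ) {t : ℝ} (ht : t ≠ 0) :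
    quadPart σ c (fun x => t * u x) = t ^ 2 * quadPart σ c u := by
  simp only [quadPart, fracSq_const_mul σ u ht, mul_pow, integral_const_mul]
  ring

theorem K1_eq (u : ℝ → ℝ) :
    K1 σ c p q u = quadPart σ c u + (∫ x : ℝ, |u x| ^ (p + 1)) - ∫ x : ℝ, |u x| ^ (q + 1) :=
  rfl

theorem K1_const_mul (u : ℝ → ℝ) {t : ℝ} (ht : 0 < t) :
    K1 σ c p q (fun x => t * u x) = t ^ 2 * (quadPart σ c u
      + t ^ (p - 1) * (∫ x : ℝ, |u x| ^ (p + 1)) - t ^ (q - 1) * ∫ x : ℝ, |u x| ^ (q + 1)) := by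
  have hpow : ∀ r : ℝ, t ^ (r + 1) = t ^ 2 * t ^ (r - 1) := fun r => by
    rw [← rpow_natCast, ← rpow_add ht]
    ring_nf
  rw [K1_eq, quadPart_const_mul u ht.ne', integral_abs_rpow_const_mul u ht,
    integral_abs_rpow_const_mul u ht, hpow, hpow]
  ring

theorem I1_const_mul (u : ℝ → ℝ) {t : ℝ} (ht : 0 < t) :
    I1 σ c p q (fun x => t * u x) = (1 / 2 - 1 / (q + 1)) * (t ^ 2 * quadPart σ c u)
      + (1 / (p + 1) - 1 / (q + 1)) * (t ^ (p + 1) * ∫ x : ℝ, |u x| ^ (p + 1)) := by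
  rw [I1, ← quadPart, quadPart_const_mul u ht.ne', integral_abs_rpow_const_mul u ht]

theorem S1_eq_I1_add (hp : p + 1 ≠ 0) (hq : q + 1 ≠ 0) (u : ℝ → ℝ) :
    S1 σ c p q u = I1 σ c p q u + 1 / (q + 1) * K1 σ c p q u := by
  unfold S1 I1 K1
  field_simp
  ring

theorem I1_nonneg (hc : 0 ≤ c) (hp : 0 < p + 1) (hpq : p ≤ q) (hq : 1 ≤ q) (u : ℝ → ℝ) :
    0 ≤ I1 σ c p q u := by
  have h2 : 1 / (q + 1) ≤ 1 / 2 := one_div_le_one_div_of_le two_pos (by linarith)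
  have hp' : 1 / (q + 1) ≤ 1 / (p + 1) := one_div_le_one_div_of_le hp (by linarith)
  have hQ := quadPart_nonneg (σ := σ) hc u
  exact add_nonneg (mul_nonneg (sub_nonneg.2 h2) hQ)
    (mul_nonneg (sub_nonneg.2 hp') (integral_abs_rpow_nonneg u _))

theorem d1_le_I1 (hc : 0 ≤ c) (hp : 0 < p + 1) (hpq : p ≤ q) (hq : 1 ≤ q) {u : ℝ → ℝ}
    (hu : u ∈ nehariSet σ c p q) : d1 σ c p q ≤ I1 σ c p q u := by
  have hS : ∀ v ∈ nehariSet σ c p q, S1 σ c p q v = I1 σ c p q v := fun v hv => by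
    rw [S1_eq_I1_add hp.ne' (by linarith) v, hv.2.2, mul_zero, add_zero]
  have hbdd : BddBelow (S1 σ c p q '' nehariSet σ c p q) :=
    ⟨0, by rintro _ ⟨v, hv, rfl⟩; exact (hS v hv).symm ▸ I1_nonneg hc hp hpq hq v⟩
  exact hS u hu ▸ csInf_le hbdd (Set.mem_image_of_mem _ hu)

theorem I1_const_mul_lt (hp : 0 < p + 1) (hpq : p ≤ q) (hq : 1 < q) {u : ℝ → ℝ}
    (hQ : 0 < quadPart σ c u) {t : ℝ} (ht : t ∈ Set.Ioo 0 1) :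
    I1 σ c p q (fun x => t * u x) < I1 σ c p q u := by
  obtain ⟨ht0, ht1⟩ := ht
  have h2 : 0 < 1 / 2 - 1 / (q + 1) :=
    sub_pos.2 (one_div_lt_one_div_of_lt two_pos (by linarith))
  have hp' : 0 ≤ 1 / (p + 1) - 1 / (q + 1) :=
    sub_nonneg.2 (one_div_le_one_div_of_le hp (by linarith))
  have hsq : t ^ 2 < 1 := by nlinarith
  have hpow : t ^ (p + 1) ≤ 1 := (rpow_lt_one ht0.le ht1 hp).le
  have hB := integral_abs_rpow_nonneg u (p + 1)
  rw [I1_const_mul u ht0, I1, ← quadPart]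
  exact add_lt_add_of_lt_of_le (mul_lt_mul_of_pos_left (mul_lt_of_lt_one_left hQ hsq) h2)
    (mul_le_mul_of_nonneg_left (mul_le_of_le_one_left hB hpow) hp')

theorem nontriv_of_K1_neg (hc : 0 ≤ c) (hq : q + 1 ≠ 0) {u : ℝ → ℝ} (hK : K1 σ c p q u < 0) :
    Nontriv u := by
  have hQ := quadPart_nonneg (σ := σ) hc u
  rw [K1_eq] at hK
  exact nontriv_of_integral_abs_rpow_ne_zero hq
    (by linarith [integral_abs_rpow_nonneg u (p + 1)] : (0 : ℝ) < _).ne'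

end Functionals

theorem exists_mem_Ioo_add_rpow_mul_sub_rpow_mul_eq_zero {a b A B C : ℝ} (ha : 0 < a)
    (hb : 0 < b) (hA : 0 < A) (h1 : A + B - C < 0) :
    ∃ t ∈ Set.Ioo (0 : ℝ) 1, A + t ^ a * B - t ^ b * C = 0 := by
  have hcont : ContinuousOn (fun t : ℝ => A + t ^ a * B - t ^ b * C) (Set.Icc 0 1) :=
    fun t _ => ((continuousAt_const.add ((continuousAt_rpow_const t a (Or.inr ha.le)).mul
      continuousAt_const)).sub ((continuousAt_rpow_const t b (Or.inr hb.le)).mul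
      continuousAt_const)).continuousWithinAt
  refine intermediate_value_Ioo' zero_le_one hcont ⟨by simpa using h1, ?_⟩
  simpa [zero_rpow ha.ne', zero_rpow hb.ne'] using hA

theorem I1_gt_d1_of_K1_neg_general
    (σ c p q : ℝ) (hc : 0 < c)
    (hp : 1 < p) (hpq : p < q)
    (v : ℝ → ℝ) (hv : MemHhalf σ v) (hK : K1 σ c p q v < 0) :
    d1 σ c p q < I1 σ c p q v := by
  have hq : 1 < q := hp.trans hpq
  have hnt : Nontriv v := nontriv_of_K1_neg hc.le (by linarith) hK
  have hQ : 0 < quadPart σ c v := quadPart_pos hc hv hnt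
  obtain ⟨t, ht, hroot⟩ := exists_mem_Ioo_add_rpow_mul_sub_rpow_mul_eq_zero
    (a := p - 1) (b := q - 1) (by linarith) (by linarith) hQ (by rwa [K1_eq] at hK)
  have hmem : (fun x => t * v x) ∈ nehariSet σ c p q :=
    ⟨hv.const_mul ht.1.ne', hnt.const_mul ht.1.ne', by rw [K1_const_mul v ht.1, hroot, mul_zero]⟩
  calc d1 σ c p q ≤ I1 σ c p q (fun x => t * v x) :=
        d1_le_I1 hc.le (by linarith) hpq.le hq.le hmem
    _ < I1 σ c p q v := I1_const_mul_lt (by linarith) hpq.le hq hQ ht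

theorem I1_gt_d1_of_K1_neg
    (σ c p q : ℝ) (hσ0 : 0 < σ) (hσ2 : σ < 2) (hc : 0 < c)
    (hp : 1 < p) (hpq : p < q) (hq : σ < 1 → q < 2 / (1 - σ) - 1)
    (v : ℝ → ℝ) (hv : MemHhalf σ v) (hK : K1 σ c p q v < 0) :
    d1 σ c p q < I1 σ c p q v :=
  I1_gt_d1_of_K1_neg_general σ c p q hc hp hpq v hv hK
end
end

section
/- Let 0 < σ ≤ 1 and 0 < c < c₀. Then the Pohozaev constraint set 𝒫_c is nonempty: if σ = 1 there exists v ∈ H^{1/2}(ℝ), v ≠ 0, with P_c(v) = 0, and if 0 < σ < 1 there exists v ∈ H^{σ/2}(ℝ), v ≠ 0, with P_c(v) = 1. -/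
/-!
Let `φ_L` be a smooth bump equal to `1` on `[-L, L]` and supported in `[-L-1, L+1]`, and let
`F(a) = -(c/2) a² + a^(p+1)/(p+1) - a^(q+1)/(q+1)` (`pohozaevDensity`), so that `P_c` of the
constant `a` on an interval of length `ℓ` is `ℓ F(a)`. Up to edge terms of size `O(1)`,
`P_c(a φ_L) = 2L F(a)`; the condition `c < c₀` says exactly that `F` is positive somewhere, so
`P_c(A φ_L) ≥ T` for a suitable `A` once `L` is large. On the other hand `P_c(a φ_L) < 0` for small
`a > 0` because `p + 1 > 2`, and the intermediate value theorem in `a` produces `P_c(a φ_L) = T`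
for any `T ≥ 0`. Being smooth with compact support, `a φ_L` has a Schwartz Fourier transform,
hence lies in every `H^{σ/2}`.
-/

open MeasureTheory Real Filter Topology ComplexConjugate
open scoped FourierTransform

noncomputable section

/-- The Pohozaev functional `P_c`. -/
def Pc (c p q : ℝ) (u : ℝ → ℝ) : ℝ :=
  -(c / 2) * (∫ x : ℝ, u x ^ 2) + (1 / (p + 1)) * (∫ x : ℝ, |u x| ^ (p + 1))
    - (1 / (q + 1)) * (∫ x : ℝ, |u x| ^ (q + 1))

open scoped ContDiff SchwartzMap

section FourierRepresentative

def schwartzOfReal {g : ℝ → ℝ} (hg : ContDiff ℝ ∞ g) (hs : HasCompactSupport g) : 𝓢(ℝ, ℂ) :=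
  (hs.comp_left Complex.ofReal_zero).toSchwartzMap (Complex.ofRealCLM.contDiff.comp hg)

@[simp]
lemma schwartzOfReal_apply {g : ℝ → ℝ} (hg : ContDiff ℝ ∞ g) (hs : HasCompactSupport g) (x : ℝ) :
    schwartzOfReal hg hs x = (g x : ℂ) :=
  rfl

theorem IsFourierRep.ae_eq_s15 {u : ℝ → ℝ} {w w' : ℝ → ℂ} (h : IsFourierRep u w)
    (h' : IsFourierRep u w') : w =ᵐ[volume] w' := by
  refine ae_eq_of_integral_contDiff_smul_eq (h.1.locallyIntegrable one_le_two)
    (h'.1.locallyIntegrable one_le_two) fun g hg hs => ?_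
  simpa [Complex.real_smul, mul_comm] using
    (h.2 (schwartzOfReal hg hs)).trans (h'.2 (schwartzOfReal hg hs)).symm

theorem hatFT_ae_eq {u : ℝ → ℝ} {w : ℝ → ℂ} (h : IsFourierRep u w) :
    hatFT u =ᵐ[volume] w := by
  have hex : ∃ w, IsFourierRep u w := ⟨w, h⟩
  rw [hatFT, dif_pos hex]
  exact hex.choose_spec.ae_eq_s15 h

theorem isFourierRep_fourier_of_hasCompactSupport {g : ℝ → ℝ} (hg : ContDiff ℝ ∞ g)
    (hs : HasCompactSupport g) : IsFourierRep g (𝓕 fun x => (g x : ℂ)) :=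
  ⟨(𝓕 (schwartzOfReal hg hs)).memLp 2 volume, (schwartzOfReal hg hs).integral_fourier_mul_eq⟩

theorem SchwartzMap.integrable_rpow_abs_mul_sq_norm {σ : ℝ} (hσ : 0 ≤ σ) (ψ : 𝓢(ℝ, ℂ)) :
    Integrable fun ξ : ℝ => |ξ| ^ σ * ‖ψ ξ‖ ^ 2 := by
  obtain ⟨C, -, hC⟩ := ψ.decay 0 0
  simp only [pow_zero, one_mul, norm_iteratedFDeriv_zero] at hC
  have hweight : ∀ ξ : ℝ, |ξ| ^ σ ≤ 1 + ‖ξ‖ ^ ⌈σ⌉₊ := fun ξ => by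
    rcases le_total |ξ| 1 with h | h
    · linarith [Real.rpow_le_one (abs_nonneg ξ) h hσ, pow_nonneg (norm_nonneg ξ) ⌈σ⌉₊]
    · rw [Real.norm_eq_abs, ← Real.rpow_natCast]
      linarith [Real.rpow_le_rpow_of_exponent_le h (Nat.le_ceil σ)]
  refine ((ψ.integrable.norm.add (ψ.integrable_pow_mul volume ⌈σ⌉₊)).const_mul C).mono'
    ((continuous_abs.rpow_const fun _ => Or.inr hσ).mul
      (ψ.continuous.norm.pow 2)).aestronglyMeasurable (Eventually.of_forall fun ξ => ?_)
  rw [Real.norm_of_nonneg (by positivity)]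
  calc |ξ| ^ σ * ‖ψ ξ‖ ^ 2 ≤ (1 + ‖ξ‖ ^ ⌈σ⌉₊) * ‖ψ ξ‖ * C := by
        rw [sq, ← mul_assoc]
        gcongr
        · exact hweight ξ
        · exact hC ξ
    _ = C * (‖ψ ξ‖ + ‖ξ‖ ^ ⌈σ⌉₊ * ‖ψ ξ‖) := by ring

theorem memHhalf_of_contDiff_of_hasCompactSupport {σ : ℝ} (hσ : 0 ≤ σ) {u : ℝ → ℝ}
    (hu : ContDiff ℝ ∞ u) (hs : HasCompactSupport u) : MemHhalf σ u := by
  refine ⟨hu.continuous.memLp_of_hasCompactSupport hs,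
    ((𝓕 (schwartzOfReal hu hs)).integrable_rpow_abs_mul_sq_norm hσ).congr ?_⟩
  filter_upwards [hatFT_ae_eq (isFourierRep_fourier_of_hasCompactSupport hu hs)] with ξ hξ
  rw [hξ, SchwartzMap.fourier_coe]
  rfl

end FourierRepresentative

section Bump

variable {x₀ : ℝ} (φ : ContDiffBump x₀)

theorem ContDiffBump.integrable_rpow {r : ℝ} (hr : 0 < r) : Integrable fun x => φ x ^ r :=
  (φ.continuous.rpow_const fun _ => Or.inr hr.le).integrable_of_hasCompactSupport
    (φ.hasCompactSupport.comp_left (g := fun t => t ^ r) (Real.zero_rpow hr.ne'))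

theorem ContDiffBump.two_mul_rIn_le_integral_rpow {r : ℝ} (hr : 0 < r) :
    2 * φ.rIn ≤ ∫ x, φ x ^ r := by
  rw [← Real.volume_real_closedBall φ.rIn_pos.le (a := x₀),
    ← integral_indicator_one measurableSet_closedBall]
  refine integral_mono ((integrableOn_const measure_closedBall_lt_top.ne).integrable_indicator
    measurableSet_closedBall) (φ.integrable_rpow hr) fun x => ?_
  by_cases hx : x ∈ Metric.closedBall x₀ φ.rIn
  · simp [hx, φ.one_of_mem_closedBall hx]
  · simp only [Set.indicator_of_notMem hx]
    exact Real.rpow_nonneg (φ.nonneg' x) r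

theorem ContDiffBump.integral_rpow_le_two_mul_rOut {r : ℝ} (hr : 0 < r) :
    ∫ x, φ x ^ r ≤ 2 * φ.rOut := by
  rw [← Real.volume_real_closedBall φ.rOut_pos.le (a := x₀),
    ← integral_indicator_one measurableSet_closedBall]
  refine integral_mono (φ.integrable_rpow hr)
    ((integrableOn_const measure_closedBall_lt_top.ne).integrable_indicator
      measurableSet_closedBall) fun x => ?_
  by_cases hx : x ∈ Metric.closedBall x₀ φ.rOut
  · simpa [hx] using Real.rpow_le_one (φ.nonneg' x) φ.le_one hr.le
  · have hφx : φ x = 0 :=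
      φ.zero_of_le_dist (by simpa [Metric.mem_closedBall] using (not_le.1 hx).le)
    simp [hx, hφx, Real.zero_rpow hr.ne']

theorem nontriv_const_mul_contDiffBump {a : ℝ} (ha : a ≠ 0) : Nontriv fun x => a * φ x := by
  intro h
  have hint := integral_congr_ae h
  rw [integral_const_mul, integral_zero] at hint
  exact mul_ne_zero ha (φ.integral_pos (μ := volume)).ne' hint

end Bump

lemma Real.rpow_add_one_eq_rpow_sub_one_mul_sq {a : ℝ} (ha : 0 < a) (r : ℝ) :
    a ^ (r + 1) = a ^ (r - 1) * a ^ 2 := by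
  rw [← Real.rpow_two, ← Real.rpow_add ha]
  ring_nf

section PohozaevFunctional

variable {c p q : ℝ}

def pohozaevDensity (c p q a : ℝ) : ℝ :=
  -(c / 2) * a ^ 2 + a ^ (p + 1) / (p + 1) - a ^ (q + 1) / (q + 1)

/-- The constant `c₀`: it equals `2 max_{a > 0} (a ^ (p - 1) / (p + 1) - a ^ (q - 1) / (q + 1))`,
the maximum being attained at `a ^ (q - p) = (p - 1) (q + 1) / ((p + 1) (q - 1))`. -/
def pohozaevThreshold (p q : ℝ) : ℝ :=
  2 * (q - p) * (p - 1) ^ ((p - 1) / (q - p)) * (q + 1) ^ ((p - 1) / (q - p)) /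
    ((p + 1) ^ ((q - 1) / (q - p)) * (q - 1) ^ ((q - 1) / (q - p)))

theorem pohozaevThreshold_eq (hp : 1 < p) (hpq : p < q) :
    let a := ((p - 1) * (q + 1) / ((p + 1) * (q - 1))) ^ (1 / (q - p))
    pohozaevThreshold p q = 2 * (a ^ (p - 1) / (p + 1) - a ^ (q - 1) / (q + 1)) := by
  intro a
  have hqp : 0 < q - p := by linarith
  have hp₁ : 0 < p - 1 := by linarith
  have hq₁ : 0 < q - 1 := by linarith
  have hp₂ : 0 < p + 1 := by linarith
  have hq₂ : 0 < q + 1 := by linarith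
  obtain ⟨t, ht_def⟩ : ∃ t, t = (p - 1) * (q + 1) / ((p + 1) * (q - 1)) := ⟨_, rfl⟩
  obtain ⟨β, hβ⟩ : ∃ β, β = (p - 1) / (q - p) := ⟨_, rfl⟩
  have ht : 0 < t := by rw [ht_def]; exact div_pos (mul_pos hp₁ hq₂) (mul_pos hp₂ hq₁)
  have ha : a = t ^ (1 / (q - p)) := by rw [ht_def]
  have hα : (q - 1) / (q - p) = β + 1 := by rw [hβ]; field_simp; ring
  have hap : a ^ (p - 1) = t ^ β := by
    rw [ha, ← Real.rpow_mul ht.le, hβ]; congr 1; field_simp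
  have haq : a ^ (q - 1) = t ^ β * t := by
    rw [ha, ← Real.rpow_mul ht.le, ← Real.rpow_add_one ht.ne', hβ]
    congr 1; field_simp; ring
  have htβ : t ^ β = (p - 1) ^ β * (q + 1) ^ β / ((p + 1) ^ β * (q - 1) ^ β) := by
    rw [ht_def, Real.div_rpow (mul_pos hp₁ hq₂).le (mul_pos hp₂ hq₁).le,
      Real.mul_rpow hp₁.le hq₂.le, Real.mul_rpow hp₂.le hq₁.le]
  rw [pohozaevThreshold, ← hβ, hα, hap, haq, Real.rpow_add_one hp₂.ne',
    Real.rpow_add_one hq₁.ne', htβ, ht_def]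
  have hp₂β : 0 < (p + 1) ^ β := Real.rpow_pos_of_pos hp₂ β
  have hq₁β : 0 < (q - 1) ^ β := Real.rpow_pos_of_pos hq₁ β
  field_simp
  ring

theorem exists_pohozaevDensity_pos (hp : 1 < p) (hpq : p < q) (hc : c < pohozaevThreshold p q) :
    ∃ a > 0, 0 < pohozaevDensity c p q a := by
  set a := ((p - 1) * (q + 1) / ((p + 1) * (q - 1))) ^ (1 / (q - p))
  have ha : 0 < a := Real.rpow_pos_of_pos (div_pos (by nlinarith) (by nlinarith)) _
  refine ⟨a, ha, ?_⟩
  rw [pohozaevThreshold_eq hp hpq] at hc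
  have : pohozaevDensity c p q a
      = a ^ 2 * ((a ^ (p - 1) / (p + 1) - a ^ (q - 1) / (q + 1)) - c / 2) := by
    rw [pohozaevDensity, Real.rpow_add_one_eq_rpow_sub_one_mul_sq ha,
      Real.rpow_add_one_eq_rpow_sub_one_mul_sq ha]
    ring
  rw [this]
  exact mul_pos (by positivity) (by linarith)

theorem pc_const_mul {φ : ℝ → ℝ} (hφ : ∀ x, 0 ≤ φ x) {a : ℝ} (ha : 0 ≤ a) :
    Pc c p q (fun x => a * φ x) = -(c / 2) * a ^ 2 * (∫ x, φ x ^ (2 : ℝ))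
      + a ^ (p + 1) / (p + 1) * (∫ x, φ x ^ (p + 1))
      - a ^ (q + 1) / (q + 1) * ∫ x, φ x ^ (q + 1) := by
  have habs : ∀ (r : ℝ) x, |a * φ x| ^ r = a ^ r * φ x ^ r := fun r x => by
    rw [abs_of_nonneg (mul_nonneg ha (hφ x)), Real.mul_rpow ha (hφ x)]
  simp only [Pc, habs, mul_pow, Real.rpow_two, integral_const_mul]
  ring

theorem continuousOn_pc_const_mul {φ : ℝ → ℝ} (hφ : ∀ x, 0 ≤ φ x) (hp : 0 ≤ p + 1)
    (hq : 0 ≤ q + 1) : ContinuousOn (fun a => Pc c p q (fun x => a * φ x)) (Set.Ici 0) := by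
  refine ContinuousOn.congr (Continuous.continuousOn ?_) fun a ha => pc_const_mul hφ ha
  fun_prop (disch := assumption)

theorem eventually_pc_const_mul_neg {φ : ℝ → ℝ} (hφ : ∀ x, 0 ≤ φ x) (hc : 0 < c) (hp : 1 < p)
    (hq : 0 < q + 1) (hφ₂ : 0 < ∫ x, φ x ^ (2 : ℝ)) :
    ∀ᶠ a in 𝓝[>] 0, Pc c p q (fun x => a * φ x) < 0 := by
  set I₂ := ∫ x, φ x ^ (2 : ℝ)
  set Iₚ := ∫ x, φ x ^ (p + 1)
  have hIq : 0 ≤ ∫ x, φ x ^ (q + 1) :=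
    integral_nonneg fun x => Real.rpow_nonneg (hφ x) _
  have hlim : Tendsto (fun a : ℝ => -(c / 2) * I₂ + a ^ (p - 1) / (p + 1) * Iₚ) (𝓝 0)
      (𝓝 (-(c / 2) * I₂)) := by
    have h := (Real.continuousAt_rpow_const 0 (p - 1) (Or.inr (by linarith))).tendsto
    rw [Real.zero_rpow (by linarith)] at h
    simpa using ((h.div_const (p + 1)).mul_const Iₚ).const_add (-(c / 2) * I₂)
  have hlim_neg : -(c / 2) * I₂ < 0 := by nlinarith
  filter_upwards [nhdsWithin_le_nhds (hlim.eventually (gt_mem_nhds hlim_neg)),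
    self_mem_nhdsWithin] with a hneg (ha : 0 < a)
  rw [pc_const_mul hφ ha.le]
  have hq_term : 0 ≤ a ^ (q + 1) / (q + 1) * ∫ x, φ x ^ (q + 1) := by positivity
  calc -(c / 2) * a ^ 2 * I₂ + a ^ (p + 1) / (p + 1) * Iₚ
        - a ^ (q + 1) / (q + 1) * ∫ x, φ x ^ (q + 1)
      ≤ a ^ 2 * (-(c / 2) * I₂ + a ^ (p - 1) / (p + 1) * Iₚ) := by
        rw [Real.rpow_add_one_eq_rpow_sub_one_mul_sq ha]
        linear_combination hq_term
    _ < 0 := mul_neg_of_pos_of_neg (by positivity) hneg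

def plateauBump (L : ℝ) (hL : 0 < L) : ContDiffBump (0 : ℝ) :=
  ⟨L, L + 1, hL, by linarith⟩

theorem pc_const_mul_plateauBump_ge {L : ℝ} (hL : 0 < L) {a : ℝ} (ha : 0 ≤ a) (hc : 0 ≤ c)
    (hp : 0 < p + 1) (hq : 0 < q + 1) :
    2 * L * pohozaevDensity c p q a - (c * a ^ 2 + 2 * a ^ (q + 1) / (q + 1))
      ≤ Pc c p q (fun x => a * plateauBump L hL x) := by
  set φ := plateauBump L hL
  have h₂ := mul_le_mul_of_nonneg_left (φ.integral_rpow_le_two_mul_rOut two_pos)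
    (by positivity : 0 ≤ c / 2 * a ^ 2)
  have hₚ := mul_le_mul_of_nonneg_left (φ.two_mul_rIn_le_integral_rpow hp)
    (by positivity : 0 ≤ a ^ (p + 1) / (p + 1))
  have h_q := mul_le_mul_of_nonneg_left (φ.integral_rpow_le_two_mul_rOut hq)
    (by positivity : 0 ≤ a ^ (q + 1) / (q + 1))
  have hIn : φ.rIn = L := rfl
  have hOut : φ.rOut = L + 1 := rfl
  rw [hOut] at h₂ h_q
  rw [hIn] at hₚ
  rw [pc_const_mul φ.nonneg' ha, pohozaevDensity]
  linear_combination h₂ + hₚ + h_q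

theorem exists_pc_const_mul_plateauBump_eq (hc : 0 < c) (hp : 1 < p) (hpq : p < q)
    (hcc : c < pohozaevThreshold p q) {T : ℝ} (hT : 0 ≤ T) :
    ∃ L, ∃ hL : 0 < L, ∃ a > 0, Pc c p q (fun x => a * plateauBump L hL x) = T := by
  obtain ⟨A, hA, hFA⟩ := exists_pohozaevDensity_pos hp hpq hcc
  set M := c * A ^ 2 + 2 * A ^ (q + 1) / (q + 1)
  have hM : 0 ≤ M := by
    have : 0 < q + 1 := by linarith
    positivity
  set L := (T + M) / (2 * pohozaevDensity c p q A) + 1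
  have hL : 0 < L := by positivity
  have hGA : T ≤ Pc c p q (fun x => A * plateauBump L hL x) := by
    refine le_trans ?_ (pc_const_mul_plateauBump_ge hL hA.le hc.le (by linarith) (by linarith))
    have : 2 * L * pohozaevDensity c p q A = T + M + 2 * pohozaevDensity c p q A := by
      simp only [L]; field_simp
    linarith
  have hφ₂ : 0 < ∫ x, plateauBump L hL x ^ (2 : ℝ) :=
    lt_of_lt_of_le (by positivity) ((plateauBump L hL).two_mul_rIn_le_integral_rpow two_pos)
  obtain ⟨ε, hGε, hε⟩ := ((eventually_pc_const_mul_neg (plateauBump L hL).nonneg' hc hp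
    (by linarith : 0 < q + 1) hφ₂).and self_mem_nhdsWithin).exists
  have hpos : Set.uIcc ε A ⊆ Set.Ici 0 := fun a ha => le_trans (le_min hε.le hA.le) ha.1
  obtain ⟨a, ha, hGa⟩ :=
    intermediate_value_uIcc (f := fun a => Pc c p q (fun x => a * plateauBump L hL x))
      ((continuousOn_pc_const_mul (plateauBump L hL).nonneg' (by linarith) (by linarith)).mono hpos)
      (Set.mem_uIcc_of_le (hGε.le.trans hT) hGA)
  exact ⟨L, hL, a, lt_of_lt_of_le (lt_min hε hA) ha.1, hGa⟩

end PohozaevFunctional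

theorem pohozaev_set_nonempty_general
    (σ c p q : ℝ) (hσ0 : 0 < σ)
    (hp : 1 < p) (hpq : p < q)
    (hc : 0 < c)
    (hcc : c < 2 * (q - p) * (p - 1) ^ ((p - 1) / (q - p)) * (q + 1) ^ ((p - 1) / (q - p)) /
      ((p + 1) ^ ((q - 1) / (q - p)) * (q - 1) ^ ((q - 1) / (q - p)))) :
    (σ = 1 → ∃ v : ℝ → ℝ, MemHhalf σ v ∧ Nontriv v ∧ Pc c p q v = 0) ∧
    (σ < 1 → ∃ v : ℝ → ℝ, MemHhalf σ v ∧ Nontriv v ∧ Pc c p q v = 1) := by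
  have hv : ∀ T, 0 ≤ T → ∃ v : ℝ → ℝ, MemHhalf σ v ∧ Nontriv v ∧ Pc c p q v = T := by
    intro T hT
    obtain ⟨L, hL, a, ha, hPc⟩ := exists_pc_const_mul_plateauBump_eq hc hp hpq hcc hT
    set φ := plateauBump L hL
    exact ⟨_, memHhalf_of_contDiff_of_hasCompactSupport hσ0.le
      (contDiff_const.mul φ.contDiff) φ.hasCompactSupport.mul_left,
      nontriv_const_mul_contDiffBump φ ha.ne', hPc⟩
  exact ⟨fun _ => hv 0 le_rfl, fun _ => hv 1 zero_le_one⟩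

theorem pohozaev_set_nonempty
    (σ c p q : ℝ) (hσ0 : 0 < σ) (hσ1 : σ ≤ 1)
    (hp : 1 < p) (hpq : p < q) (hq : σ < 1 → q < 2 / (1 - σ) - 1)
    (hc : 0 < c)
    (hcc : c < 2 * (q - p) * (p - 1) ^ ((p - 1) / (q - p)) * (q + 1) ^ ((p - 1) / (q - p)) /
      ((p + 1) ^ ((q - 1) / (q - p)) * (q - 1) ^ ((q - 1) / (q - p)))) :
    (σ = 1 → ∃ v : ℝ → ℝ, MemHhalf σ v ∧ Nontriv v ∧ Pc c p q v = 0) ∧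
    (σ < 1 → ∃ v : ℝ → ℝ, MemHhalf σ v ∧ Nontriv v ∧ Pc c p q v = 1) :=
  pohozaev_set_nonempty_general σ c p q hσ0 hp hpq hc hcc
end
end
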